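/- Domain adaptation bound: for any hypothesis θ ∈ H, the target risk satisfies ε_t(θ) ≤ ε_s(θ) + d_{HΔH}(p,q)/2 + C, where C = min_{θ'∈H} [ε_s(θ') + ε_t(θ')] and d_{HΔH} is the H-divergence of the symmetric-difference class. -/
import Mathlib


open MeasureTheory

private lemma da_intble {X : Type*} [MeasurableSpace X] (μ : Measure X) [IsFiniteMeasure μ]
    (g h : X → ℝ) (hg : Measurable g) (hh : Measurable h)
    (hbg : ∀ x, g x = 0 ∨ g x = 1) (hbh : ∀ x, h x = 0 ∨ h x = 1) :
    Integrable (fun x => |g x - h x|) μ := by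
  apply Integrable.mono' (integrable_const (1 : ℝ)) ((hg.sub hh).abs.aestronglyMeasurable)
  filter_upwards with x
  simp only [Real.norm_eq_abs, abs_abs]
  rcases hbg x with h1 | h1 <;> rcases hbh x with h2 | h2 <;> simp [h1, h2]

private lemma da_int_mem {X : Type*} [MeasurableSpace X] (μ : Measure X) [IsProbabilityMeasure μ]
    (g h : X → ℝ) (hg : Measurable g) (hh : Measurable h)
    (hbg : ∀ x, g x = 0 ∨ g x = 1) (hbh : ∀ x, h x = 0 ∨ h x = 1) :
    (0 : ℝ) ≤ ∫ x, |g x - h x| ∂μ ∧ (∫ x, |g x - h x| ∂μ) ≤ 1 := by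
  constructor
  · exact integral_nonneg fun x => abs_nonneg _
  · calc (∫ x, |g x - h x| ∂μ) ≤ ∫ _, (1 : ℝ) ∂μ := by
          apply integral_mono (da_intble μ g h hg hh hbg hbh) (integrable_const 1)
          intro x
          rcases hbg x with h1 | h1 <;> rcases hbh x with h2 | h2 <;> simp [h1, h2]
        _ = 1 := by simp

/-- Domain adaptation bound. For binary ({0,1}-valued) classifiers, any hypothesis
`θ ∈ H` satisfies `ε_t(θ) ≤ ε_s(θ) + d_{HΔH}(p,q)/2 + C`, where
`ε_s(θ) = E_{x~p}|θ(x) − f_s(x)|`, `ε_t(θ) = E_{x~q}|θ(x) − f_t(x)|`,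
`d_{HΔH}(p,q) = 2 sup_{θ₁,θ₂ ∈ H} |E_p|θ₁−θ₂| − E_q|θ₁−θ₂||` is the H-divergence of the
symmetric-difference class, and `C = min_{θ'∈H} [ε_s(θ') + ε_t(θ')]`. -/
theorem domain_adaptation_bound {X : Type*} [MeasurableSpace X] (Hc : Set (X → ℝ))
    (fs ft : X → ℝ) (p q : ProbabilityMeasure X)
    (hbin : ∀ θ ∈ Hc, ∀ x, θ x = 0 ∨ θ x = 1)
    (hfs : ∀ x, fs x = 0 ∨ fs x = 1) (hft : ∀ x, ft x = 0 ∨ ft x = 1)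
    (hmeas : ∀ θ ∈ Hc, Measurable θ) (hms : Measurable fs) (hmt : Measurable ft)
    (θ : X → ℝ) (hθ : θ ∈ Hc) :
    (∫ x, |θ x - ft x| ∂(q : Measure X))
      ≤ (∫ x, |θ x - fs x| ∂(p : Measure X))
        + (2 * sSup {s : ℝ | ∃ θ₁ ∈ Hc, ∃ θ₂ ∈ Hc,
            s = |(∫ x, |θ₁ x - θ₂ x| ∂(p : Measure X))
                  - ∫ x, |θ₁ x - θ₂ x| ∂(q : Measure X)|}) / 2
        + sInf {s : ℝ | ∃ θ' ∈ Hc,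
            s = (∫ x, |θ' x - fs x| ∂(p : Measure X))
                  + ∫ x, |θ' x - ft x| ∂(q : Measure X)} := by
  set Ssup := {s : ℝ | ∃ θ₁ ∈ Hc, ∃ θ₂ ∈ Hc,
      s = |(∫ x, |θ₁ x - θ₂ x| ∂(p : Measure X))
            - ∫ x, |θ₁ x - θ₂ x| ∂(q : Measure X)|} with hSsup
  set Sinf := {s : ℝ | ∃ θ' ∈ Hc,
      s = (∫ x, |θ' x - fs x| ∂(p : Measure X))
            + ∫ x, |θ' x - ft x| ∂(q : Measure X)} with hSinf
  have hbdd : BddAbove Ssup := by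
    refine ⟨1, ?_⟩
    rintro s ⟨θ₁, h1, θ₂, h2, rfl⟩
    have A := da_int_mem (p : Measure X) θ₁ θ₂ (hmeas _ h1) (hmeas _ h2) (hbin _ h1) (hbin _ h2)
    have B := da_int_mem (q : Measure X) θ₁ θ₂ (hmeas _ h1) (hmeas _ h2) (hbin _ h1) (hbin _ h2)
    rw [abs_sub_le_iff]
    constructor <;> linarith [A.1, A.2, B.1, B.2]
  rw [show (2 * sSup Ssup) / 2 = sSup Ssup by ring]
  have key : ∀ s ∈ Sinf,
      (∫ x, |θ x - ft x| ∂(q : Measure X))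
        ≤ (∫ x, |θ x - fs x| ∂(p : Measure X)) + sSup Ssup + s := by
    rintro s ⟨θ', hθ', rfl⟩
    have int1 : (∫ x, |θ x - ft x| ∂(q : Measure X))
        ≤ (∫ x, |θ x - θ' x| ∂(q : Measure X)) + ∫ x, |θ' x - ft x| ∂(q : Measure X) := by
      rw [← integral_add (da_intble _ _ _ (hmeas _ hθ) (hmeas _ hθ') (hbin _ hθ) (hbin _ hθ'))
        (da_intble _ _ _ (hmeas _ hθ') hmt (hbin _ hθ') hft)]
      apply integral_mono (da_intble _ _ _ (hmeas _ hθ) hmt (hbin _ hθ) hft)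
      · exact (da_intble _ _ _ (hmeas _ hθ) (hmeas _ hθ') (hbin _ hθ) (hbin _ hθ')).add
          (da_intble _ _ _ (hmeas _ hθ') hmt (hbin _ hθ') hft)
      · intro x
        have := abs_sub_le (θ x) (θ' x) (ft x)
        simpa using this
    have int2 : (∫ x, |θ x - θ' x| ∂(q : Measure X))
        ≤ (∫ x, |θ x - θ' x| ∂(p : Measure X)) + sSup Ssup := by
      have hmem : |(∫ x, |θ x - θ' x| ∂(p : Measure X))
          - ∫ x, |θ x - θ' x| ∂(q : Measure X)| ∈ Ssup := ⟨θ, hθ, θ', hθ', rfl⟩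
      have := le_csSup hbdd hmem
      have habs := abs_sub_abs_le_abs_sub (∫ x, |θ x - θ' x| ∂(p : Measure X))
        (∫ x, |θ x - θ' x| ∂(q : Measure X))
      have := neg_abs_le ((∫ x, |θ x - θ' x| ∂(p : Measure X))
          - ∫ x, |θ x - θ' x| ∂(q : Measure X))
      linarith [le_csSup hbdd hmem]
    have int3 : (∫ x, |θ x - θ' x| ∂(p : Measure X))
        ≤ (∫ x, |θ x - fs x| ∂(p : Measure X)) + ∫ x, |θ' x - fs x| ∂(p : Measure X) := by
      rw [← integral_add (da_intble _ _ _ (hmeas _ hθ) hms (hbin _ hθ) hfs)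
        (da_intble _ _ _ (hmeas _ hθ') hms (hbin _ hθ') hfs)]
      apply integral_mono (da_intble _ _ _ (hmeas _ hθ) (hmeas _ hθ') (hbin _ hθ) (hbin _ hθ'))
      · exact (da_intble _ _ _ (hmeas _ hθ) hms (hbin _ hθ) hfs).add
          (da_intble _ _ _ (hmeas _ hθ') hms (hbin _ hθ') hfs)
      · intro x
        have h1 := abs_sub_le (θ x) (fs x) (θ' x)
        have h2 : |fs x - θ' x| = |θ' x - fs x| := abs_sub_comm _ _
        simp only [Pi.add_apply]
        linarith
    linarith
  have hne : (∫ x, |θ x - fs x| ∂(p : Measure X))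
      + ∫ x, |θ x - ft x| ∂(q : Measure X) ∈ Sinf := ⟨θ, hθ, rfl⟩
  have hlb : (∫ x, |θ x - ft x| ∂(q : Measure X))
      - (∫ x, |θ x - fs x| ∂(p : Measure X)) - sSup Ssup ≤ sInf Sinf := by
    apply le_csInf ⟨_, hne⟩
    intro s hs
    have := key s hs
    linarith
  linarith
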